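/- There exists ε > 0 such that for all real x with |x| < ε, F(1/6, -1/6; 1/3; x(x+2)^3 / (2x+1)^3) = (1+2x)^(-1/2) · (1+x)^(1/3). -/

import Mathlib

/-!
Both sides solve, near `0`, the hypergeometric equation `z(1-z)F'' + (1/3 - z)F' + F/36 = 0`
pulled back along `z = x(x+2)³/(2x+1)³`: the left side because the series may be differentiated
termwise, the right side by direct computation. The pulled-back equation is singular at `x = 0`,
and the Wronskian `W` of the two solutions satisfies a first-order equation for which
`W³ · intFactor` is constant; since `intFactor 0 = 0` and `intFactor ≠ 0` elsewhere, `W = 0`.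
Hence the ratio of the two solutions is constant, and both equal `1` at `0`.
-/

open Real

/-- The Gauss hypergeometric series `F(a,b;c;z) = ∑ ((a)_n (b)_n / ((c)_n n!)) z^n`,
where `(q)_n` is the rising (Pochhammer) factorial. -/
noncomputable def hypgeo (a b c z : ℝ) : ℝ :=
  ∑' n : ℕ, ((∏ i ∈ Finset.range n, (a + i)) * (∏ i ∈ Finset.range n, (b + i)) /
    ((∏ i ∈ Finset.range n, (c + i)) * (Nat.factorial n))) * z ^ n

open Filter Topology Set Asymptotics

noncomputable def seriesSum (c : ℕ → ℝ) (z : ℝ) : ℝ := ∑' n, c n * z ^ n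

def derivCoeff (c : ℕ → ℝ) (n : ℕ) : ℝ := (n + 1) * c (n + 1)

def PolyGrowth (c : ℕ → ℝ) : Prop := ∃ k : ℕ, c =O[atTop] fun n => (n : ℝ) ^ k

lemma isBigO_natCast_pow_pow {k l : ℕ} (hkl : k ≤ l) :
    (fun n : ℕ => (n : ℝ) ^ k) =O[atTop] fun n => (n : ℝ) ^ l :=
  .of_bound 1 <| (eventually_ge_atTop 1).mono fun n hn => by
    simpa using pow_le_pow_right₀ (by exact_mod_cast hn : (1 : ℝ) ≤ n) hkl

namespace PolyGrowth

variable {c d : ℕ → ℝ}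

lemma of_abs_le (C : ℝ) (h : ∀ n, |c n| ≤ C) : PolyGrowth c :=
  ⟨0, .of_bound C <| .of_forall fun n => by simpa using h n⟩

lemma sub (hc : PolyGrowth c) (hd : PolyGrowth d) : PolyGrowth (c - d) := by
  obtain ⟨k, hk⟩ := hc
  obtain ⟨l, hl⟩ := hd
  exact ⟨k + l, (hk.trans (isBigO_natCast_pow_pow (by omega))).sub
    (hl.trans (isBigO_natCast_pow_pow (by omega)))⟩

lemma natCast_mul (hc : PolyGrowth c) : PolyGrowth fun n => n * c n := by
  obtain ⟨k, hk⟩ := hc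
  exact ⟨k + 1, ((isBigO_refl (fun n : ℕ => (n : ℝ)) atTop).mul hk).congr_right
    fun n => by ring⟩

lemma comp_succ (hc : PolyGrowth c) : PolyGrowth fun n => c (n + 1) := by
  obtain ⟨k, hk⟩ := hc
  refine ⟨k, (hk.comp_tendsto (tendsto_add_atTop_nat 1)).trans <|
    .of_bound (2 ^ k) <| (eventually_ge_atTop 1).mono fun n hn => ?_⟩
  have hn : (1 : ℝ) ≤ n := by exact_mod_cast hn
  simp only [Function.comp_apply, Nat.cast_add, Nat.cast_one, norm_pow, Real.norm_eq_abs,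
    abs_of_nonneg (by positivity : (0 : ℝ) ≤ n + 1), Nat.abs_cast, ← mul_pow]
  exact pow_le_pow_left₀ (by positivity) (by linarith) k

lemma derivCoeff (hc : PolyGrowth c) : PolyGrowth (derivCoeff c) := by
  have h := hc.natCast_mul.comp_succ
  simp only [Nat.cast_add, Nat.cast_one] at h
  exact h

lemma summable_norm (hc : PolyGrowth c) {z : ℝ} (hz : |z| < 1) :
    Summable fun n => ‖c n * z ^ n‖ := by
  obtain ⟨k, hk⟩ := hc
  exact summable_norm_mul_geometric_of_norm_lt_one' hz (by simpa using hk)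

lemma hasSum (hc : PolyGrowth c) {z : ℝ} (hz : |z| < 1) :
    HasSum (fun n => c n * z ^ n) (seriesSum c z) :=
  (hc.summable_norm hz).of_norm.hasSum

lemma hasDerivAt (hc : PolyGrowth c) {z : ℝ} (hz : |z| < 1) :
    HasDerivAt (seriesSum c) (seriesSum (_root_.derivCoeff c) z) z := by
  obtain ⟨r, hzr, hr⟩ := exists_between hz
  have hr0 : 0 ≤ r := (abs_nonneg z).trans hzr.le
  replace hr : |r| < 1 := by rwa [abs_of_nonneg hr0]
  replace hzr : z ∈ Ioo (-r) r := abs_lt.1 hzr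
  have hbound : ∀ n, ∀ y ∈ Ioo (-r) r,
      ‖c n * (n * y ^ (n - 1))‖ ≤ |c n| * n * r ^ (n - 1) := fun n y hy => by
    rw [Real.norm_eq_abs, abs_mul, abs_mul, abs_pow, Nat.abs_cast, mul_assoc]
    gcongr
    exact abs_lt.2 hy |>.le
  have hu : Summable fun n => |c n| * n * r ^ (n - 1) := by
    refine (summable_nat_add_iff 1).mp ((hc.derivCoeff.summable_norm hr).congr fun n => ?_)
    simp only [_root_.derivCoeff, norm_mul, norm_pow, Real.norm_eq_abs,
      abs_of_nonneg (by positivity : (0 : ℝ) ≤ n + 1), abs_of_nonneg hr0,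
      Nat.cast_add, Nat.cast_one, Nat.add_sub_cancel]
    ring
  have hderiv := hasDerivAt_tsum_of_isPreconnected hu isOpen_Ioo isPreconnected_Ioo
    (fun n y _ => (hasDerivAt_pow n y).const_mul (c n)) hbound hzr
    (hc.summable_norm hz).of_norm hzr
  refine hderiv.congr_deriv ?_
  rw [(Summable.of_norm_bounded hu fun n => hbound n z hzr).tsum_eq_zero_add]
  simp [seriesSum, _root_.derivCoeff, mul_comm, mul_left_comm]

lemma mul_seriesSum_derivCoeff (hc : PolyGrowth c) {z : ℝ} (hz : |z| < 1) :
    z * seriesSum (_root_.derivCoeff c) z = seriesSum (fun n => n * c n) z := by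
  rw [seriesSum, seriesSum, (hc.natCast_mul.hasSum hz).summable.tsum_eq_zero_add,
    ← tsum_mul_left]
  simp only [_root_.derivCoeff, CharP.cast_eq_zero, zero_mul, pow_zero, mul_one, Nat.cast_add,
    Nat.cast_one, pow_succ, zero_add]
  exact tsum_congr fun n => by ring

end PolyGrowth

noncomputable def hypgeoCoeff (a b c : ℝ) (n : ℕ) : ℝ :=
  (∏ i ∈ Finset.range n, (a + i)) * (∏ i ∈ Finset.range n, (b + i)) /
    ((∏ i ∈ Finset.range n, (c + i)) * (Nat.factorial n))

section Hypergeometric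

variable {a b c : ℝ}

lemma hypgeo_eq_seriesSum (z : ℝ) : hypgeo a b c z = seriesSum (hypgeoCoeff a b c) z := rfl

lemma hypgeoCoeff_succ (hc : ∀ n : ℕ, c + n ≠ 0) (n : ℕ) :
    (n + 1) * (c + n) * hypgeoCoeff a b c (n + 1) = (a + n) * (b + n) * hypgeoCoeff a b c n := by
  simp only [hypgeoCoeff, Finset.prod_range_succ, Nat.factorial_succ, Nat.cast_mul, Nat.cast_add,
    Nat.cast_one]
  field_simp [hc n]

lemma abs_hypgeoCoeff_le_one (hc : 0 < c) (hab : |a| + |b| ≤ c + 1) (hab' : |a| * |b| ≤ c)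
    (n : ℕ) : |hypgeoCoeff a b c n| ≤ 1 := by
  induction n with
  | zero => simp [hypgeoCoeff]
  | succ n ih =>
    have hpos : 0 < ((n : ℝ) + 1) * (c + n) := by positivity
    have hratio : |(a + n) * (b + n)| ≤ (n + 1) * (c + n) := by
      have ha := (abs_add_le a n).trans_eq (by rw [Nat.abs_cast])
      have hb := (abs_add_le b n).trans_eq (by rw [Nat.abs_cast])
      calc |(a + n) * (b + n)| ≤ (|a| + n) * (|b| + n) := by
            rw [abs_mul]; exact mul_le_mul ha hb (abs_nonneg _) (by positivity)
        _ ≤ (n + 1) * (c + n) := by nlinarith [n.cast_nonneg (α := ℝ)]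
    refine le_of_mul_le_mul_left ?_ hpos
    calc (n + 1) * (c + n) * |hypgeoCoeff a b c (n + 1)|
        = |(a + n) * (b + n)| * |hypgeoCoeff a b c n| := by
          rw [← abs_of_pos hpos, ← abs_mul, ← abs_mul,
            hypgeoCoeff_succ (fun k => by positivity)]
      _ ≤ (n + 1) * (c + n) * 1 := mul_le_mul hratio ih (abs_nonneg _) hpos.le

theorem hypgeo_ode (hc : ∀ n : ℕ, c + n ≠ 0) (hA : PolyGrowth (hypgeoCoeff a b c)) {z : ℝ}
    (hz : |z| < 1) :
    z * (1 - z) * seriesSum (derivCoeff (derivCoeff (hypgeoCoeff a b c))) z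
      + (c - (a + b + 1) * z) * seriesSum (derivCoeff (hypgeoCoeff a b c)) z
      - a * b * seriesSum (hypgeoCoeff a b c) z = 0 := by
  set A := hypgeoCoeff a b c
  have hA₁ := hA.derivCoeff
  have hB : PolyGrowth fun n => (n - 1) * A n := by
    convert hA.natCast_mul.sub hA using 1
    funext n
    simp only [Pi.sub_apply]
    ring
  have e₁ := hA.mul_seriesSum_derivCoeff hz
  have e₂ := hA₁.mul_seriesSum_derivCoeff hz
  have e₃ := hB.mul_seriesSum_derivCoeff hz
  have hB₁ : derivCoeff (fun n => (n - 1) * A n) = fun n => n * derivCoeff A n := by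
    funext n
    simp only [derivCoeff, Nat.cast_add, Nat.cast_one]
    ring
  rw [hB₁] at e₃
  have hsum := (((hA₁.natCast_mul.hasSum hz).sub (hB.natCast_mul.hasSum hz)).add
    ((hA₁.hasSum hz).mul_left c)).sub (((hA.natCast_mul.hasSum hz).mul_left (a + b + 1)).add
    ((hA.hasSum hz).mul_left (a * b)))
  have hterm : ∀ n : ℕ, n * derivCoeff A n * z ^ n - n * ((n - 1) * A n) * z ^ n
      + c * (derivCoeff A n * z ^ n)
      - ((a + b + 1) * (n * A n * z ^ n) + a * b * (A n * z ^ n)) = 0 := fun n => by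
    simp only [derivCoeff]
    linear_combination z ^ n * hypgeoCoeff_succ (a := a) (b := b) hc n
  simp only [hterm] at hsum
  linear_combination e₂ - z * e₂ - e₃ - (a + b + 1) * e₁ - hasSum_zero.unique hsum

lemma hypgeo_zero : hypgeo a b c 0 = 1 := by
  rw [hypgeo, tsum_eq_single 0 fun n hn => by simp [hn]]
  simp

end Hypergeometric

def SolvesLinearODE (p q r : ℝ → ℝ) (s : Set ℝ) (f : ℝ → ℝ) : Prop :=
  ∃ f₁ f₂ : ℝ → ℝ, ∀ x ∈ s, HasDerivAt f (f₁ x) x ∧ HasDerivAt f₁ (f₂ x) x ∧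
    p x * f₂ x + q x * f₁ x + r x * f x = 0

namespace SolvesLinearODE

variable {p q r f : ℝ → ℝ} {s t : Set ℝ}

lemma mono (hf : SolvesLinearODE p q r t f) (hst : s ⊆ t) : SolvesLinearODE p q r s f := by
  obtain ⟨f₁, f₂, hf⟩ := hf
  exact ⟨f₁, f₂, fun x hx => hf x (hst hx)⟩

lemma comp (hf : SolvesLinearODE p q r t f) {φ φ₁ φ₂ : ℝ → ℝ}
    (hφ : ∀ x ∈ s, HasDerivAt φ (φ₁ x) x ∧ HasDerivAt φ₁ (φ₂ x) x) (hst : MapsTo φ s t) :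
    SolvesLinearODE (fun x => p (φ x) * φ₁ x) (fun x => -(p (φ x) * φ₂ x) + q (φ x) * φ₁ x ^ 2)
      (fun x => r (φ x) * φ₁ x ^ 3) s (f ∘ φ) := by
  obtain ⟨f₁, f₂, hf⟩ := hf
  refine ⟨fun x => f₁ (φ x) * φ₁ x, fun x => f₂ (φ x) * φ₁ x ^ 2 + f₁ (φ x) * φ₂ x,
    fun x hx => ?_⟩
  obtain ⟨hf₀, hf₁, hode⟩ := hf (φ x) (hst hx)
  obtain ⟨hφ₀, hφ₁⟩ := hφ x hx
  refine ⟨hf₀.comp x hφ₀,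
    ((hf₁.comp x hφ₀).mul hφ₁).congr_deriv (by rw [Function.comp_apply]; ring), ?_⟩
  simp only [Function.comp_apply]
  linear_combination φ₁ x ^ 3 * hode

end SolvesLinearODE

lemma eq_of_hasDerivAt_zero_of_ne {s : Set ℝ} (hs : s.OrdConnected) {f : ℝ → ℝ} {x₀ x : ℝ}
    (hf : ContinuousOn f s) (hf' : ∀ y ∈ s, y ≠ x₀ → HasDerivAt f 0 y) (hx₀ : x₀ ∈ s)
    (hx : x ∈ s) : f x = f x₀ := by
  have key : ∀ a ∈ s, ∀ b ∈ s, a < b → x₀ ∉ Ioo a b → f a = f b := fun a ha b hb hab hx₀ab => by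
    obtain ⟨y, hy, hslope⟩ := exists_hasDerivAt_eq_slope f (fun _ => 0) hab
      (hf.mono (hs.out ha hb)) fun y hy =>
        hf' y (hs.out ha hb (Ioo_subset_Icc_self hy)) fun h => hx₀ab (h ▸ hy)
    rw [eq_comm, div_eq_zero_iff, sub_eq_zero] at hslope
    exact (hslope.resolve_right (sub_ne_zero.2 hab.ne')).symm
  rcases lt_trichotomy x x₀ with h | rfl | h
  · exact key x hx x₀ hx₀ h fun hmem => hmem.2.false
  · rfl
  · exact (key x₀ hx₀ x hx h fun hmem => hmem.1.false).symm

section Wronskian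

variable {s : Set ℝ} {x₀ : ℝ} {p q r f g : ℝ → ℝ}

/-- `Wᵐ u` has zero derivative away from `x₀`, so it is identically `(Wᵐ u) x₀ = 0`. -/
lemma eq_zero_of_integratingFactor (hs : s.OrdConnected) (hx₀ : x₀ ∈ s) {m : ℕ} (hm : m ≠ 0)
    {W W' u u' : ℝ → ℝ} (hW : ∀ x ∈ s, HasDerivAt W (W' x) x) (hu : ContinuousOn u s)
    (hu' : ∀ x ∈ s, x ≠ x₀ → HasDerivAt u (u' x) x)
    (hWode : ∀ x ∈ s, p x * W' x + q x * W x = 0)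
    (huode : ∀ x ∈ s, x ≠ x₀ → p x * u' x = m * q x * u x)
    (hp : ∀ x ∈ s, x ≠ x₀ → p x ≠ 0) (hu₀ : u x₀ = 0) (hu_ne : ∀ x ∈ s, x ≠ x₀ → u x ≠ 0) :
    ∀ x ∈ s, x ≠ x₀ → W x = 0 := by
  obtain ⟨k, rfl⟩ := Nat.exists_eq_add_one_of_ne_zero hm
  have hconst : ∀ x ∈ s, x ≠ x₀ → HasDerivAt (fun y => W y ^ (k + 1) * u y) 0 x := by
    intro x hx hxx₀
    refine (((hW x hx).pow (k + 1)).mul (hu' x hx hxx₀)).congr_deriv ?_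
    refine mul_left_cancel₀ (hp x hx hxx₀) ?_
    simp only [Pi.pow_apply, Nat.add_sub_cancel]
    linear_combination (↑(k + 1) * W x ^ k * u x) * hWode x hx + W x ^ (k + 1) * huode x hx hxx₀
  intro x hx hxx₀
  have hcont : ContinuousOn (fun y => W y ^ (k + 1) * u y) s :=
    (ContinuousOn.pow (fun y hy => (hW y hy).continuousAt.continuousWithinAt) _).mul hu
  have h := eq_of_hasDerivAt_zero_of_ne hs hcont hconst hx₀ hx
  rw [hu₀, mul_zero] at h
  exact pow_eq_zero_iff k.succ_ne_zero |>.1 <|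
    (mul_eq_zero.1 h).resolve_right (hu_ne x hx hxx₀)

lemma eq_of_wronskian_eq_zero (hs : s.OrdConnected) (hx₀ : x₀ ∈ s) {f' g' : ℝ → ℝ}
    (hf : ∀ x ∈ s, HasDerivAt f (f' x) x) (hg : ∀ x ∈ s, HasDerivAt g (g' x) x)
    (hg_ne : ∀ x ∈ s, g x ≠ 0) (hW : ∀ x ∈ s, x ≠ x₀ → f' x * g x - f x * g' x = 0)
    (h₀ : f x₀ = g x₀) : ∀ x ∈ s, f x = g x := by
  intro x hx
  have hcont : ContinuousOn (fun y => f y / g y) s := fun y hy =>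
    ((hf y hy).continuousAt.div (hg y hy).continuousAt (hg_ne y hy)).continuousWithinAt
  have h := eq_of_hasDerivAt_zero_of_ne hs hcont (fun y hy hyx₀ =>
    ((hf y hy).div (hg y hy) (hg_ne y hy)).congr_deriv (by rw [hW y hy hyx₀, zero_div])) hx₀ hx
  rwa [h₀, div_self (hg_ne x₀ hx₀), div_eq_one_iff_eq (hg_ne x hx)] at h

theorem SolvesLinearODE.eq_of_integratingFactor (hs : s.OrdConnected) (hx₀ : x₀ ∈ s)
    (hf : SolvesLinearODE p q r s f) (hg : SolvesLinearODE p q r s g)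
    (hp : ∀ x ∈ s, x ≠ x₀ → p x ≠ 0) {m : ℕ} (hm : m ≠ 0) {u u' : ℝ → ℝ}
    (hu : ContinuousOn u s) (hu' : ∀ x ∈ s, x ≠ x₀ → HasDerivAt u (u' x) x)
    (huode : ∀ x ∈ s, x ≠ x₀ → p x * u' x = m * q x * u x) (hu₀ : u x₀ = 0)
    (hu_ne : ∀ x ∈ s, x ≠ x₀ → u x ≠ 0) (hg_ne : ∀ x ∈ s, g x ≠ 0) (h₀ : f x₀ = g x₀) :
    ∀ x ∈ s, f x = g x := by
  obtain ⟨f₁, f₂, hf⟩ := hf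
  obtain ⟨g₁, g₂, hg⟩ := hg
  refine eq_of_wronskian_eq_zero hs hx₀ (fun x hx => (hf x hx).1) (fun x hx => (hg x hx).1)
    hg_ne (eq_zero_of_integratingFactor hs hx₀ hm (W' := fun x => f₂ x * g x - f x * g₂ x)
      (fun x hx => ?_) hu hu' (fun x hx => ?_) huode hp hu₀ hu_ne) h₀
  · obtain ⟨hf₀, hf₁, -⟩ := hf x hx
    obtain ⟨hg₀, hg₁, -⟩ := hg x hx
    exact ((hf₁.mul hg₀).sub (hf₀.mul hg₁)).congr_deriv (by ring)
  · linear_combination g x * (hf x hx).2.2 - f x * (hg x hx).2.2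

end Wronskian

theorem solvesLinearODE_hypgeo {a b c : ℝ} (hc : ∀ n : ℕ, c + n ≠ 0)
    (hA : PolyGrowth (hypgeoCoeff a b c)) :
    SolvesLinearODE (fun z => z * (1 - z)) (fun z => c - (a + b + 1) * z) (fun _ => -(a * b))
      (Ioo (-1) 1) (hypgeo a b c) :=
  ⟨_, _, fun _ hz => ⟨hA.hasDerivAt (abs_lt.2 hz), hA.derivCoeff.hasDerivAt (abs_lt.2 hz),
    by rw [hypgeo_eq_seriesSum]; linear_combination hypgeo_ode hc hA (abs_lt.2 hz)⟩⟩

noncomputable section Transformation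

def zMap (x : ℝ) : ℝ := x * (x + 2) ^ 3 / (2 * x + 1) ^ 3
def zMap' (x : ℝ) : ℝ := 2 * (x + 2) ^ 2 * (x - 1) ^ 2 / (2 * x + 1) ^ 4
def zMap'' (x : ℝ) : ℝ := 36 * (x + 2) * (x - 1) / (2 * x + 1) ^ 5

def odeP (x : ℝ) : ℝ := zMap x * (1 - zMap x) * zMap' x
def odeQ (x : ℝ) : ℝ := -(zMap x * (1 - zMap x) * zMap'' x) + (1 / 3 - zMap x) * zMap' x ^ 2
def odeR (x : ℝ) : ℝ := zMap' x ^ 3 / 36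

def rhs (x : ℝ) : ℝ := (1 + 2 * x) ^ ((-1 : ℝ) / 2) * (1 + x) ^ ((1 : ℝ) / 3)
def rhsLogDeriv (x : ℝ) : ℝ := -1 / (1 + 2 * x) + 1 / (3 * (1 + x))

/-- `intFactor = 8 zMap (1 - zMap)² / zMap'³`: the cube of the hypergeometric Wronskian
`z^(-1/3) (1-z)^(-2/3)`, pulled back along `zMap`, is `8 / intFactor`. -/
def intFactor (x : ℝ) : ℝ := x * (1 + x) ^ 2 * (2 * x + 1) ^ 3 / (x + 2) ^ 3

variable {x : ℝ}

lemma hasDerivAt_zMap (hx : -1 / 2 < x) :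
    HasDerivAt zMap (zMap' x) x ∧ HasDerivAt zMap' (zMap'' x) x := by
  have h : 2 * x + 1 ≠ 0 := by linarith
  have hlin : HasDerivAt (fun y => 2 * y + 1) 2 x := by
    simpa using ((hasDerivAt_id x).const_mul 2).add_const 1
  constructor
  · refine (((hasDerivAt_id x).mul (((hasDerivAt_id x).add_const 2).pow 3)).div
      (hlin.pow 3) (pow_ne_zero 3 h)).congr_deriv ?_
    simp only [zMap', id_eq, Pi.mul_apply, Pi.pow_apply, Nat.reduceSub]
    field_simp
    ring
  · refine (((((hasDerivAt_id x).add_const 2).pow 2).const_mul 2).mul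
      (((hasDerivAt_id x).sub_const 1).pow 2)).div (hlin.pow 4) (pow_ne_zero 4 h)
      |>.congr_deriv ?_
    simp only [zMap'', id_eq, Pi.mul_apply, Pi.pow_apply, Nat.reduceSub]
    field_simp
    ring

lemma abs_zMap_lt_one (hx : |x| < 1 / 20) : |zMap x| < 1 := by
  obtain ⟨hx₁, hx₂⟩ := abs_lt.1 hx
  have hden : (9 / 10 : ℝ) ^ 3 ≤ (2 * x + 1) ^ 3 := by gcongr; linarith
  have hx₃ : 0 < x + 2 := by linarith
  have hnum : (x + 2) ^ 3 ≤ (41 / 20 : ℝ) ^ 3 := by gcongr; linarith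
  rw [zMap, abs_div, abs_mul, abs_pow, abs_pow, abs_of_pos hx₃,
    abs_of_pos (by linarith : 0 < 2 * x + 1), div_lt_one (by positivity)]
  calc |x| * (x + 2) ^ 3 ≤ 1 / 20 * (41 / 20) ^ 3 :=
        mul_le_mul hx.le hnum (pow_pos hx₃ 3).le (by norm_num)
    _ < (9 / 10) ^ 3 := by norm_num
    _ ≤ (2 * x + 1) ^ 3 := hden

lemma odeP_ne_zero (hx : |x| < 1 / 20) (hx₀ : x ≠ 0) : odeP x ≠ 0 := by
  obtain ⟨hx₁, hx₂⟩ := abs_lt.1 hx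
  have h₁ : 2 * x + 1 ≠ 0 := by linarith
  have h₂ : x + 2 ≠ 0 := by linarith
  have h₃ : x - 1 ≠ 0 := by linarith
  have hz : zMap x ≠ 0 := div_ne_zero (mul_ne_zero hx₀ (pow_ne_zero 3 h₂)) (pow_ne_zero 3 h₁)
  have hz₁ : 1 - zMap x ≠ 0 := sub_ne_zero.2 (abs_lt.1 (abs_zMap_lt_one hx)).2.ne'
  have hz' : zMap' x ≠ 0 := div_ne_zero (mul_ne_zero (mul_ne_zero two_ne_zero
    (pow_ne_zero 2 h₂)) (pow_ne_zero 2 h₃)) (pow_ne_zero 4 h₁)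
  exact mul_ne_zero (mul_ne_zero hz hz₁) hz'

lemma hasDerivAt_rhs (hx : -1 / 2 < x) : HasDerivAt rhs (rhs x * rhsLogDeriv x) x := by
  have h₁ : 0 < 1 + 2 * x := by linarith
  have h₂ : 0 < 1 + x := by linarith
  have ha := (Real.hasDerivAt_rpow_const (p := (-1 : ℝ) / 2) (Or.inl h₁.ne')).comp x
    (((hasDerivAt_id x).const_mul 2).const_add 1)
  have hb := (Real.hasDerivAt_rpow_const (p := (1 : ℝ) / 3) (Or.inl h₂.ne')).comp x
    ((hasDerivAt_id x).const_add 1)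
  refine (ha.mul hb).congr_deriv ?_
  simp only [rhs, rhsLogDeriv, id_eq, Function.comp_apply, Real.rpow_sub h₁, Real.rpow_sub h₂,
    Real.rpow_one]
  field_simp

lemma hasDerivAt_rhsLogDeriv (hx : -1 / 2 < x) :
    HasDerivAt rhsLogDeriv (2 / (1 + 2 * x) ^ 2 - 1 / (3 * (1 + x) ^ 2)) x := by
  have h₁ : 1 + 2 * x ≠ 0 := by linarith
  have h₂ : 1 + x ≠ 0 := by linarith
  refine ((hasDerivAt_const x (-1 : ℝ)).div (((hasDerivAt_id x).const_mul 2).const_add 1) h₁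
    |>.add <| (hasDerivAt_const x (1 : ℝ)).div (((hasDerivAt_id x).const_add 1).const_mul 3)
      (mul_ne_zero three_ne_zero h₂)).congr_deriv ?_
  simp only [id_eq]
  field_simp
  ring

lemma riccati_rhsLogDeriv (hx : -1 / 2 < x) :
    odeP x * (rhsLogDeriv x ^ 2 + (2 / (1 + 2 * x) ^ 2 - 1 / (3 * (1 + x) ^ 2)))
      + odeQ x * rhsLogDeriv x + odeR x = 0 := by
  have h₁ : x * 2 + 1 ≠ 0 := by linarith
  have h₁' : 1 + x * 2 ≠ 0 := by linarith
  have h₂ : 1 + x ≠ 0 := by linarith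
  simp only [odeP, odeQ, odeR, zMap, zMap', zMap'', rhsLogDeriv]
  field_simp
  ring

lemma solvesLinearODE_rhs : SolvesLinearODE odeP odeQ odeR (Ioi (-1 / 2)) rhs :=
  ⟨fun x => rhs x * rhsLogDeriv x,
    fun x => rhs x * (rhsLogDeriv x ^ 2 + (2 / (1 + 2 * x) ^ 2 - 1 / (3 * (1 + x) ^ 2))),
    fun x hx => ⟨hasDerivAt_rhs hx,
      ((hasDerivAt_rhs hx).mul (hasDerivAt_rhsLogDeriv hx)).congr_deriv (by ring),
      by linear_combination rhs x * riccati_rhsLogDeriv hx⟩⟩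

lemma hasDerivAt_intFactor (hx : -1 / 2 < x) (hx₀ : x ≠ 0) :
    HasDerivAt intFactor
      (intFactor x * (1 / x + 2 / (1 + x) + 6 / (2 * x + 1) - 3 / (x + 2))) x := by
  have h₁ : x * 2 + 1 ≠ 0 := by linarith
  have h₂ : 1 + x ≠ 0 := by linarith
  have h₃ : x + 2 ≠ 0 := by linarith
  refine (((hasDerivAt_id x).mul (((hasDerivAt_id x).const_add 1).pow 2)).mul
    ((((hasDerivAt_id x).const_mul 2).add_const 1).pow 3)).div
    (((hasDerivAt_id x).add_const 2).pow 3) (pow_ne_zero 3 h₃) |>.congr_deriv ?_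
  simp only [intFactor, id_eq, Pi.mul_apply, Pi.pow_apply, Nat.reduceSub]
  field_simp
  ring

lemma odeP_mul_deriv_intFactor (hx : -1 / 2 < x) (hx₀ : x ≠ 0) :
    odeP x * (intFactor x * (1 / x + 2 / (1 + x) + 6 / (2 * x + 1) - 3 / (x + 2)))
      = 3 * odeQ x * intFactor x := by
  have h₁ : x * 2 + 1 ≠ 0 := by linarith
  have h₂ : 1 + x ≠ 0 := by linarith
  have h₃ : x + 2 ≠ 0 := by linarith
  simp only [odeP, odeQ, intFactor, zMap, zMap', zMap'']
  field_simp
  ring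

lemma continuousOn_intFactor : ContinuousOn intFactor (Ioi (-1 / 2)) :=
  ContinuousOn.div (by fun_prop) (by fun_prop) fun x hx =>
    pow_ne_zero 3 (by linarith [mem_Ioi.1 hx])

lemma intFactor_ne_zero (hx : -1 / 2 < x) (hx₀ : x ≠ 0) : intFactor x ≠ 0 := by
  have h₁ : 2 * x + 1 ≠ 0 := by linarith
  have h₂ : 1 + x ≠ 0 := by linarith
  have h₃ : x + 2 ≠ 0 := by linarith
  unfold intFactor
  positivity

lemma rhs_pos (hx : -1 / 2 < x) : 0 < rhs x := by
  have h₁ : 0 < 1 + 2 * x := by linarith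
  have h₂ : 0 < 1 + x := by linarith
  unfold rhs
  positivity

lemma solvesLinearODE_hypgeo_comp_zMap :
    SolvesLinearODE odeP odeQ odeR (Ioo (-(1 / 20)) (1 / 20))
      (hypgeo (1 / 6) (-1 / 6) (1 / 3) ∘ zMap) := by
  have hA : PolyGrowth (hypgeoCoeff (1 / 6) (-1 / 6) (1 / 3)) :=
    .of_abs_le 1 (abs_hypgeoCoeff_le_one (by norm_num) (by norm_num [abs_of_neg])
      (by norm_num [abs_of_neg]))
  have h := (solvesLinearODE_hypgeo (fun n => by positivity) hA).comp
    (s := Ioo (-(1 / 20)) (1 / 20)) (fun y hy => hasDerivAt_zMap (by linarith [hy.1]))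
    (fun y hy => abs_lt.1 (abs_zMap_lt_one (abs_lt.2 hy)))
  convert h using 2 <;> simp only [odeP, odeQ, odeR] <;> ring

end Transformation

theorem stmt6 : ∃ ε > 0, ∀ x : ℝ, |x| < ε →
    hypgeo (1/6) (-1/6) (1/3) (x * (x + 2)^3 / (2*x + 1)^3) =
      (1 + 2*x) ^ ((-1 : ℝ)/2) * (1 + x) ^ ((1 : ℝ)/3) := by
  have hs : Ioo (-(1 / 20)) (1 / 20) ⊆ Ioi (-1 / 2 : ℝ) := fun y hy => by
    rw [mem_Ioi]; linarith [hy.1]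
  refine ⟨1 / 20, by norm_num, fun x hx => ?_⟩
  refine solvesLinearODE_hypgeo_comp_zMap.eq_of_integratingFactor ordConnected_Ioo (x₀ := 0)
    (by norm_num) (solvesLinearODE_rhs.mono hs) (fun y hy => odeP_ne_zero (abs_lt.2 hy))
    three_ne_zero (continuousOn_intFactor.mono hs) (fun y hy => hasDerivAt_intFactor (hs hy))
    (fun y hy hy₀ => by exact_mod_cast odeP_mul_deriv_intFactor (hs hy) hy₀)
    (by simp [intFactor]) (fun y hy => intFactor_ne_zero (hs hy))
    (fun y hy => (rhs_pos (hs hy)).ne') (by simp [zMap, hypgeo_zero, rhs]) x (abs_lt.1 hx)
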